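/- arXiv:1702.00209 — 13 statements merged into one kernel-verified Lean document; each statement's English description precedes it below -/
import Mathlib

section
/- Suppose c* is an optimal pushing strategy and for some index m we have 0 < c*_m < 1. Then the first-order condition B · ρ_m · (∑_{k=1}^M t_k (1 − c*_k)) + 1 = exp(B · ∑_{k=1}^M t_k ρ_k c*_k) holds. -/
/-!
Moving only the coordinate `c m` keeps an interior optimum inside the cube, so the restriction
`x ↦ G_f (update c m x)` has a local maximum at `c m` and its derivative vanishes there. With
`A = ∑ t_k (1 - c_k)`, `T = ∑ t_k ρ_k c_k` and `E = exp (-B T)`, that derivative is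
`t_m (A B ρ_m E - (1 - E))`; dividing by `t_m` and multiplying by `exp (B T) = E⁻¹` gives
the claim.
-/

open Function Set Filter Topology Real

section

variable {ι : Type*} [DecidableEq ι]

theorem isLocalMax_update_of_isMaxOn_pi {α β : Type*} [TopologicalSpace α] [Preorder β]
    {s : ι → Set α} {F : (ι → α) → β} {c : ι → α} (hc : c ∈ univ.pi s)
    (hmax : IsMaxOn F (univ.pi s) c) {m : ι} (hm : s m ∈ 𝓝 (c m)) :
    IsLocalMax (fun x => F (update c m x)) (c m) := by
  filter_upwards [hm] with x hx
  rw [update_eq_self]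
  exact hmax ((update_mem_pi_iff_of_mem hc).mpr fun _ => hx)

variable [Fintype ι]

theorem hasDerivAt_sum_apply_update {g : ι → ℝ → ℝ} {g' x : ℝ} (c : ι → ℝ) (m : ι)
    (hg : HasDerivAt (g m) g' x) :
    HasDerivAt (fun y => ∑ k, g k (update c m y k)) g' x := by
  have hsum : (fun y => ∑ k, g k (update c m y k))
      = fun y => g m y + ∑ k ∈ Finset.univ.erase m, g k (c k) := by
    funext y
    rw [← Finset.add_sum_erase _ _ (Finset.mem_univ m), update_self]
    congr 1
    exact Finset.sum_congr rfl fun k hk => by rw [update_of_ne (Finset.ne_of_mem_erase hk)]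
  rw [hsum]
  exact hg.add_const _

noncomputable def offloadingGain (B : ℝ) (t ρ c : ι → ℝ) : ℝ :=
  (∑ i, t i * (1 - c i)) * (1 - exp (-B * ∑ k, t k * ρ k * c k))

theorem hasDerivAt_offloadingGain_update (B : ℝ) (t ρ c : ι → ℝ) (m : ι) :
    HasDerivAt (fun x => offloadingGain B t ρ (update c m x))
      (-t m * (1 - exp (-B * ∑ k, t k * ρ k * c k))
        + (∑ i, t i * (1 - c i)) * (B * t m * ρ m * exp (-B * ∑ k, t k * ρ k * c k)))
      (c m) := by
  have hA : HasDerivAt (fun x => ∑ i, t i * (1 - update c m x i)) (-t m) (c m) :=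
    hasDerivAt_sum_apply_update (g := fun i y => t i * (1 - y)) c m
      (by simpa using ((hasDerivAt_id (c m)).const_sub 1).const_mul (t m))
  have hT : HasDerivAt (fun x => ∑ k, t k * ρ k * update c m x k) (t m * ρ m) (c m) :=
    hasDerivAt_sum_apply_update (g := fun k y => t k * ρ k * y) c m
      (by simpa using (hasDerivAt_id (c m)).const_mul (t m * ρ m))
  have hE := ((hT.const_mul (-B)).exp).const_sub 1
  unfold offloadingGain
  refine (hA.fun_mul hE).congr_deriv ?_
  rw [update_eq_self]
  ring

end

theorem stmt_0_general (M : ℕ) (B : ℝ)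
    (t ρ : Fin M → ℝ) (ht : ∀ i, 0 < t i)
    (c : Fin M → ℝ) (hc : ∀ i, 0 ≤ c i ∧ c i ≤ 1)
    (hopt : ∀ d : Fin M → ℝ, (∀ i, 0 ≤ d i ∧ d i ≤ 1) →
      (∑ i, t i * (1 - d i)) * (1 - Real.exp (-B * ∑ k, t k * ρ k * d k)) ≤
      (∑ i, t i * (1 - c i)) * (1 - Real.exp (-B * ∑ k, t k * ρ k * c k)))
    (m : Fin M) (hm0 : 0 < c m) (hm1 : c m < 1) :
    B * ρ m * (∑ k, t k * (1 - c k)) + 1 = Real.exp (B * ∑ k, t k * ρ k * c k) := by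
  have hmax : IsLocalMax (fun x => offloadingGain B t ρ (update c m x)) (c m) :=
    isLocalMax_update_of_isMaxOn_pi (s := fun _ => Icc 0 1) (F := offloadingGain B t ρ)
      (fun i _ => hc i) (fun d hd => hopt d fun i => hd i trivial) (Icc_mem_nhds hm0 hm1)
  have hderiv := hmax.hasDerivAt_eq_zero (hasDerivAt_offloadingGain_update B t ρ c m)
  set A := ∑ k, t k * (1 - c k)
  set T := ∑ k, t k * ρ k * c k
  have hfoc : A * B * ρ m * exp (-B * T) + exp (-B * T) = 1 := by
    have : t m * (A * B * ρ m * exp (-B * T) + exp (-B * T) - 1) = 0 := by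
      linear_combination hderiv
    linarith [(mul_eq_zero.mp this).resolve_left (ht m).ne']
  have hinv : exp (-B * T) * exp (B * T) = 1 := by rw [← exp_add]; simp
  linear_combination exp (B * T) * hfoc - (A * B * ρ m + 1) * hinv

/-- If `c` is an optimal pushing strategy and `0 < c m < 1` for some
group `m`, then the first-order condition
`B ρ_m (∑_k t_k (1 - c_k)) + 1 = exp (B ∑_k t_k ρ_k c_k)` holds. -/
theorem stmt_0 (M : ℕ) (hM : 1 ≤ M) (B : ℝ) (hB : 0 < B)
    (t ρ : Fin M → ℝ) (ht : ∀ i, 0 < t i) (hρ : ∀ i, 0 < ρ i ∧ ρ i ≤ 1)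
    (c : Fin M → ℝ) (hc : ∀ i, 0 ≤ c i ∧ c i ≤ 1)
    (hopt : ∀ d : Fin M → ℝ, (∀ i, 0 ≤ d i ∧ d i ≤ 1) →
      (∑ i, t i * (1 - d i)) * (1 - Real.exp (-B * ∑ k, t k * ρ k * d k)) ≤
      (∑ i, t i * (1 - c i)) * (1 - Real.exp (-B * ∑ k, t k * ρ k * c k)))
    (m : Fin M) (hm0 : 0 < c m) (hm1 : c m < 1) :
    B * ρ m * (∑ k, t k * (1 - c k)) + 1 = Real.exp (B * ∑ k, t k * ρ k * c k) :=
  stmt_0_general M B t ρ ht c hc hopt m hm0 hm1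
end

section
/- Suppose c* is an optimal pushing strategy and for some index m we have 0 < c*_m < 1. Then for every index i with ρ_i < ρ_m one has c*_i = 0, and for every index j with ρ_j > ρ_m one has c*_j = 1. -/
/-- Exchange lemma: if `ρ a < ρ b`, `0 < c a` and `c b < 1`, then `c` is not optimal. -/
lemma exchange_lemma (M : ℕ) (B : ℝ) (hB : 0 < B)
    (t ρ : Fin M → ℝ) (ht : ∀ i, 0 < t i)
    (c : Fin M → ℝ) (hc : ∀ i, 0 ≤ c i ∧ c i ≤ 1)
    (hopt : ∀ d : Fin M → ℝ, (∀ i, 0 ≤ d i ∧ d i ≤ 1) →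
      (∑ i, t i * (1 - d i)) * (1 - Real.exp (-B * ∑ k, t k * ρ k * d k)) ≤
      (∑ i, t i * (1 - c i)) * (1 - Real.exp (-B * ∑ k, t k * ρ k * c k)))
    (a b : Fin M) (hab : ρ a < ρ b) (ha : 0 < c a) (hb : c b < 1) : False := by
  have hne : a ≠ b := by
    intro h; rw [h] at hab; exact lt_irrefl _ hab
  set ε : ℝ := min (t a * c a) (t b * (1 - c b)) with hε
  have hε0 : 0 < ε := lt_min (mul_pos (ht a) ha) (mul_pos (ht b) (by linarith))
  set d : Fin M → ℝ := fun i =>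
    c i + (if i = b then ε / t b else 0) - (if i = a then ε / t a else 0) with hd
  have hta := ht a
  have htb := ht b
  have hd_mem : ∀ i, 0 ≤ d i ∧ d i ≤ 1 := by
    intro i
    rcases eq_or_ne i a with rfl | hia
    · have : i ≠ b := hne
      have h1 : d i = c i - ε / t i := by simp [hd, this]
      have h2 : ε / t i ≤ c i := by
        rw [div_le_iff₀ (ht i)]
        calc ε ≤ t i * c i := min_le_left _ _
        _ = c i * t i := mul_comm _ _
      constructor
      · rw [h1]; linarith
      · rw [h1]
        have := (hc i).2
        have : 0 < ε / t i := div_pos hε0 (ht i)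
        linarith [(hc i).2]
    · rcases eq_or_ne i b with rfl | hib
      · have h1 : d i = c i + ε / t i := by simp [hd, hia]
        have h2 : ε / t i ≤ 1 - c i := by
          rw [div_le_iff₀ (ht i)]
          calc ε ≤ t i * (1 - c i) := min_le_right _ _
          _ = (1 - c i) * t i := mul_comm _ _
        have : 0 < ε / t i := div_pos hε0 (ht i)
        constructor
        · rw [h1]; linarith [(hc i).1]
        · rw [h1]; linarith
      · have h1 : d i = c i := by simp [hd, hia, hib]
        rw [h1]; exact hc i
  -- first factor unchanged
  have hsum1 : ∑ i, t i * (1 - d i) = ∑ i, t i * (1 - c i) := by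
    have key : ∀ i : Fin M, t i * (1 - d i) =
        t i * (1 - c i) - (if i = b then t b * (ε / t b) else 0)
          + (if i = a then t a * (ε / t a) else 0) := by
      intro i
      rcases eq_or_ne i a with rfl | hia
      · have hib : i ≠ b := hne
        simp [hd, hib]; ring
      · rcases eq_or_ne i b with rfl | hib
        · simp [hd, hia]; ring
        · simp [hd, hia, hib]
    rw [Finset.sum_congr rfl (fun i _ => key i)]
    rw [Finset.sum_add_distrib, Finset.sum_sub_distrib]
    rw [Finset.sum_ite_eq' Finset.univ b, Finset.sum_ite_eq' Finset.univ a]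
    simp [mul_div_cancel₀ ε (ne_of_gt hta), mul_div_cancel₀ ε (ne_of_gt htb)]
  -- exponent sum increases by ε * (ρ b - ρ a)
  have hsum2 : ∑ k, t k * ρ k * d k = (∑ k, t k * ρ k * c k) + ε * (ρ b - ρ a) := by
    have key : ∀ k : Fin M, t k * ρ k * d k =
        t k * ρ k * c k + (if k = b then t b * ρ b * (ε / t b) else 0)
          - (if k = a then t a * ρ a * (ε / t a) else 0) := by
      intro k
      rcases eq_or_ne k a with rfl | hka
      · have hkb : k ≠ b := hne
        simp [hd, hkb]; ring
      · rcases eq_or_ne k b with rfl | hkb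
        · simp [hd, hka]; ring
        · simp [hd, hka, hkb]
    rw [Finset.sum_congr rfl (fun k _ => key k)]
    rw [Finset.sum_sub_distrib, Finset.sum_add_distrib]
    rw [Finset.sum_ite_eq' Finset.univ b, Finset.sum_ite_eq' Finset.univ a]
    have e1 : t b * ρ b * (ε / t b) = ε * ρ b := by
      field_simp
    have e2 : t a * ρ a * (ε / t a) = ε * ρ a := by
      field_simp
    simp [e1, e2]; ring
  -- first factor positive
  have hA : 0 < ∑ i, t i * (1 - c i) := by
    have h1 : ∀ i ∈ Finset.univ, (0:ℝ) ≤ t i * (1 - c i) := by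
      intro i _
      exact mul_nonneg (le_of_lt (ht i)) (by linarith [(hc i).2])
    have h2 : t b * (1 - c b) ≤ ∑ i, t i * (1 - c i) :=
      Finset.single_le_sum h1 (Finset.mem_univ b)
    have : 0 < t b * (1 - c b) := mul_pos htb (by linarith)
    linarith
  -- strict improvement
  have hexp : Real.exp (-B * ∑ k, t k * ρ k * d k) <
      Real.exp (-B * ∑ k, t k * ρ k * c k) := by
    apply Real.exp_lt_exp.2
    rw [hsum2]
    have : 0 < ε * (ρ b - ρ a) := mul_pos hε0 (by linarith)
    nlinarith
  have := hopt d hd_mem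
  rw [hsum1] at this
  nlinarith

/-- If an optimal pushing strategy has `0 < c m < 1`, then every group
with smaller sharing probability gets pushing probability 0, and every group with
larger sharing probability gets pushing probability 1. -/
theorem stmt_2 (M : ℕ) (hM : 1 ≤ M) (B : ℝ) (hB : 0 < B)
    (t ρ : Fin M → ℝ) (ht : ∀ i, 0 < t i) (hρ : ∀ i, 0 < ρ i ∧ ρ i ≤ 1)
    (c : Fin M → ℝ) (hc : ∀ i, 0 ≤ c i ∧ c i ≤ 1)
    (hopt : ∀ d : Fin M → ℝ, (∀ i, 0 ≤ d i ∧ d i ≤ 1) →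
      (∑ i, t i * (1 - d i)) * (1 - Real.exp (-B * ∑ k, t k * ρ k * d k)) ≤
      (∑ i, t i * (1 - c i)) * (1 - Real.exp (-B * ∑ k, t k * ρ k * c k)))
    (m : Fin M) (hm0 : 0 < c m) (hm1 : c m < 1) :
    (∀ i : Fin M, ρ i < ρ m → c i = 0) ∧ (∀ j : Fin M, ρ m < ρ j → c j = 1) := by
  constructor
  · intro i hi
    by_contra h
    have hi0 : 0 < c i := lt_of_le_of_ne (hc i).1 (Ne.symm h)
    exact exchange_lemma M B hB t ρ ht c hc hopt i m hi hi0 hm1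
  · intro j hj
    by_contra h
    have hj1 : c j < 1 := lt_of_le_of_ne (hc j).2 h
    exact exchange_lemma M B hB t ρ ht c hc hopt m j hj hm0 hj1
end

section
/- Assume the groups are sorted so that ρ_1 < ρ_2 < ⋯ < ρ_M. Suppose the vector c* with c*_i = 0 for i < m, c*_j = 1 for j > m, and 0 < c*_m < 1 satisfying the watershed equation at index m, is an optimal pushing strategy. Then the index m satisfies both f¹_m > 0 and f⁰_m > 0. -/
/-- With sorted sharing probabilities, if the vector `c` that is 0
below `m`, 1 above `m`, and has `0 < c m < 1` satisfying the watershed equation at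
`m` is an optimal pushing strategy, then `f¹_m > 0` and `f⁰_m > 0`. -/
theorem stmt_6 (M : ℕ) (hM : 1 ≤ M) (B : ℝ) (hB : 0 < B)
    (t ρ : Fin M → ℝ) (ht : ∀ i, 0 < t i) (hρ : ∀ i, 0 < ρ i ∧ ρ i ≤ 1)
    (hsort : StrictMono ρ) (m : Fin M)
    (c : Fin M → ℝ)
    (hz : ∀ i : Fin M, i < m → c i = 0)
    (ho : ∀ j : Fin M, m < j → c j = 1)
    (hm0 : 0 < c m) (hm1 : c m < 1)
    (hw : B * ρ m * ((∑ i ∈ Finset.Iic m, t i) - t m * c m) + 1 =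
      Real.exp (B * (∑ j ∈ Finset.Ioi m, t j * ρ j) + B * t m * ρ m * c m))
    (hc : ∀ i, 0 ≤ c i ∧ c i ≤ 1)
    (hopt : ∀ d : Fin M → ℝ, (∀ i, 0 ≤ d i ∧ d i ≤ 1) →
      (∑ i, t i * (1 - d i)) * (1 - Real.exp (-B * ∑ k, t k * ρ k * d k)) ≤
      (∑ i, t i * (1 - c i)) * (1 - Real.exp (-B * ∑ k, t k * ρ k * c k))) :
    0 < 1 + B * ρ m * (∑ i ∈ Finset.Iic m, t i) -
      Real.exp (B * ∑ j ∈ Finset.Ioi m, t j * ρ j) ∧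
    0 < Real.exp (B * ∑ j ∈ Finset.Ici m, t j * ρ j) -
      B * ρ m * (∑ i ∈ Finset.Iio m, t i) - 1 := by
  have htm := ht m
  have hρm := (hρ m).1
  have hIic : (∑ i ∈ Finset.Iic m, t i) = t m + ∑ i ∈ Finset.Iio m, t i := by
    rw [← Finset.Iio_insert, Finset.sum_insert (by simp)]
  have hIci : (∑ j ∈ Finset.Ici m, t j * ρ j)
      = t m * ρ m + ∑ j ∈ Finset.Ioi m, t j * ρ j := by
    rw [← Finset.Ioi_insert, Finset.sum_insert (by simp)]
  set E := B * ∑ j ∈ Finset.Ioi m, t j * ρ j with hE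
  have p1 : 0 < B * ρ m * (t m * c m) :=
    mul_pos (mul_pos hB hρm) (mul_pos htm hm0)
  have p2 : 0 < B * ρ m * (t m * (1 - c m)) :=
    mul_pos (mul_pos hB hρm) (mul_pos htm (by linarith))
  have e1 : Real.exp E < Real.exp (E + B * t m * ρ m * c m) := by
    apply Real.exp_lt_exp.mpr; nlinarith
  have e2 : Real.exp (E + B * t m * ρ m * c m)
      < Real.exp (E + B * t m * ρ m) := by
    apply Real.exp_lt_exp.mpr; nlinarith
  constructor
  · nlinarith [hw, e1, p1]
  · have : B * (∑ j ∈ Finset.Ici m, t j * ρ j) = E + B * t m * ρ m := by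
      rw [hIci]; ring
    rw [this]
    nlinarith [hw, e2, p2, hIic]
end

section
/- Assume the groups are sorted so that ρ_1 < ρ_2 < ⋯ < ρ_M. If the index m satisfies f¹_m ≤ 0, then every optimal pushing strategy c* has c*_m = 0. -/
/-!
Write `S` for the unpushed demand `∑ tᵢ (1 - cᵢ)` and `T` for the sharing density `∑ tₖ ρₖ cₖ`.
Along coordinate `j` the gain `S (1 - e^{-BT})` has derivative `tⱼ e^{-BT} (B ρⱼ S - (e^{BT} - 1))`.
If an optimum had `c m > 0`, the first-order condition at `m` would give `e^{BT} - 1 ≤ B ρₘ S`.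
A later group `k` with `c k < 1` forces `S > 0`, so `ρₘ < ρₖ` makes its marginal gain strictly
positive; hence all later groups are fully pushed. Then `S ≤ ∑_{i ≤ m} tᵢ` and
`T > ∑_{j > m} tⱼ ρⱼ`, which together give `f¹ₘ > 0`.
-/

open Finset Function Real

theorem HasDerivAt.nonpos_of_isMaxOn_Icc {f : ℝ → ℝ} {a b x d : ℝ} (hf : HasDerivAt f d x)
    (hmax : IsMaxOn f (Set.Icc a b) x) (hax : a ≤ x) (hxb : x < b) : d ≤ 0 := by
  have hseg := (convex_Icc (𝕜 := ℝ) a b).segment_subset ⟨hax, hxb.le⟩ ⟨hax.trans hxb.le, le_rfl⟩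
  have := hmax.localize.hasFDerivWithinAt_nonpos hf.hasFDerivAt.hasFDerivWithinAt
    (sub_mem_posTangentConeAt_of_segment_subset hseg)
  simp only [ContinuousLinearMap.toSpanSingleton_apply, smul_eq_mul]
    at this
  exact nonpos_of_mul_nonpos_right this (sub_pos.2 hxb)

theorem HasDerivAt.nonneg_of_isMaxOn_Icc {f : ℝ → ℝ} {a b x d : ℝ} (hf : HasDerivAt f d x)
    (hmax : IsMaxOn f (Set.Icc a b) x) (hax : a < x) (hxb : x ≤ b) : 0 ≤ d := by
  have hseg := (convex_Icc (𝕜 := ℝ) a b).segment_subset ⟨hax.le, hxb⟩ ⟨le_rfl, hax.le.trans hxb⟩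
  have := hmax.localize.hasFDerivWithinAt_nonpos hf.hasFDerivAt.hasFDerivWithinAt
    (sub_mem_posTangentConeAt_of_segment_subset hseg)
  simp only [ContinuousLinearMap.toSpanSingleton_apply, smul_eq_mul]
    at this
  exact nonneg_of_mul_nonpos_right this (sub_neg.2 hax)

theorem Function.update_mem_Icc {ι α : Type*} [DecidableEq ι] [Preorder α] {a b c : ι → α}
    (hc : c ∈ Set.Icc a b) {j : ι} {y : α} (hy : y ∈ Set.Icc (a j) (b j)) :
    update c j y ∈ Set.Icc a b := by
  constructor <;> intro i <;> rcases eq_or_ne i j with rfl | hij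
  · simpa using hy.1
  · simpa [update_of_ne hij] using hc.1 i
  · simpa using hy.2
  · simpa [update_of_ne hij] using hc.2 i

namespace Offloading

variable {ι : Type*} [Fintype ι]

def unpushedDemand (t c : ι → ℝ) : ℝ := ∑ i, t i * (1 - c i)

def sharingDensity (t ρ c : ι → ℝ) : ℝ := ∑ k, t k * ρ k * c k

noncomputable def gain (B : ℝ) (t ρ c : ι → ℝ) : ℝ :=
  unpushedDemand t c * (1 - exp (-B * sharingDensity t ρ c))

variable {B : ℝ} {t ρ c : ι → ℝ}

theorem unpushedDemand_pos (ht : ∀ i, 0 ≤ t i) (hc : ∀ i, c i ≤ 1) {k : ι} (htk : 0 < t k)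
    (hck : c k < 1) : 0 < unpushedDemand t c :=
  sum_pos' (fun i _ => mul_nonneg (ht i) (sub_nonneg.2 (hc i)))
    ⟨k, mem_univ k, mul_pos htk (sub_pos.2 hck)⟩

section Coordinate

variable [DecidableEq ι]

theorem hasDerivAt_unpushedDemand_update (t c : ι → ℝ) (j : ι) (y : ℝ) :
    HasDerivAt (fun y => unpushedDemand t (update c j y)) (-t j) y := by
  have := HasDerivAt.fun_sum (u := univ) fun i _ =>
    ((hasDerivAt_pi.1 (hasDerivAt_update c j y) i).const_sub 1).const_mul (t i)
  simpa [unpushedDemand, Pi.single_apply] using this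

theorem hasDerivAt_sharingDensity_update (t ρ c : ι → ℝ) (j : ι) (y : ℝ) :
    HasDerivAt (fun y => sharingDensity t ρ (update c j y)) (t j * ρ j) y := by
  have := HasDerivAt.fun_sum (u := univ) fun i _ =>
    (hasDerivAt_pi.1 (hasDerivAt_update c j y) i).const_mul (t i * ρ i)
  simpa [sharingDensity, Pi.single_apply] using this

theorem hasDerivAt_gain_update (B : ℝ) (t ρ c : ι → ℝ) (j : ι) :
    HasDerivAt (fun y => gain B t ρ (update c j y))
      (t j * exp (-B * sharingDensity t ρ c) *
        (B * ρ j * unpushedDemand t c - (exp (B * sharingDensity t ρ c) - 1))) (c j) := by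
  have := (hasDerivAt_unpushedDemand_update t c j (c j)).fun_mul
    (((hasDerivAt_sharingDensity_update t ρ c j (c j)).const_mul (-B)).exp.const_sub 1)
  simp only [update_eq_self] at this
  refine this.congr_deriv ?_
  have hinv : exp (-B * sharingDensity t ρ c) * exp (B * sharingDensity t ρ c) = 1 := by
    rw [← exp_add, neg_mul, neg_add_cancel, exp_zero]
  linear_combination t j * hinv

theorem isMaxOn_gain_update (hmax : IsMaxOn (gain B t ρ) (Set.Icc 0 1) c)
    (hc : c ∈ Set.Icc 0 1) (j : ι) :
    IsMaxOn (fun y => gain B t ρ (update c j y)) (Set.Icc 0 1) (c j) :=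
  isMaxOn_iff.2 fun y hy => by
    simpa only [update_eq_self] using isMaxOn_iff.1 hmax _ (update_mem_Icc hc hy)

theorem exp_sub_one_le_of_isMaxOn (hmax : IsMaxOn (gain B t ρ) (Set.Icc 0 1) c)
    (hc : c ∈ Set.Icc 0 1) {j : ι} (htj : 0 < t j) (hcj : 0 < c j) :
    exp (B * sharingDensity t ρ c) - 1 ≤ B * ρ j * unpushedDemand t c := by
  have := (hasDerivAt_gain_update B t ρ c j).nonneg_of_isMaxOn_Icc
    (isMaxOn_gain_update hmax hc j) hcj (hc.2 j)
  exact sub_nonneg.1 (nonneg_of_mul_nonneg_right this (mul_pos htj (exp_pos _)))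

theorem le_exp_sub_one_of_isMaxOn (hmax : IsMaxOn (gain B t ρ) (Set.Icc 0 1) c)
    (hc : c ∈ Set.Icc 0 1) {j : ι} (htj : 0 < t j) (hcj : c j < 1) :
    B * ρ j * unpushedDemand t c ≤ exp (B * sharingDensity t ρ c) - 1 := by
  have := (hasDerivAt_gain_update B t ρ c j).nonpos_of_isMaxOn_Icc
    (isMaxOn_gain_update hmax hc j) (hc.1 j) hcj
  exact sub_nonpos.1 (nonpos_of_mul_nonpos_right this (mul_pos htj (exp_pos _)))

theorem eq_one_of_isMaxOn (hB : 0 < B) (ht : ∀ i, 0 < t i)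
    (hmax : IsMaxOn (gain B t ρ) (Set.Icc 0 1) c) (hc : c ∈ Set.Icc 0 1) {m k : ι}
    (hcm : 0 < c m) (hρ : ρ m < ρ k) : c k = 1 := by
  by_contra hne
  have hck : c k < 1 := (hc.2 k).lt_of_ne hne
  have hS := unpushedDemand_pos (fun i => (ht i).le) hc.2 (ht k) hck
  have hm := exp_sub_one_le_of_isMaxOn hmax hc (ht m) hcm
  have hk := le_exp_sub_one_of_isMaxOn hmax hc (ht k) hck
  nlinarith [mul_pos hB hS]

end Coordinate

section Ordered

variable [LinearOrder ι]

theorem unpushedDemand_le_sum_Iic [LocallyFiniteOrderBot ι] (ht : ∀ i, 0 ≤ t i)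
    (hc : ∀ i, 0 ≤ c i) {m : ι} (hlater : ∀ k, m < k → c k = 1) :
    unpushedDemand t c ≤ ∑ i ∈ Iic m, t i :=
  calc unpushedDemand t c = ∑ i ∈ Iic m, t i * (1 - c i) :=
        (sum_subset (subset_univ _) fun i _ hi => by
          rw [hlater i (not_le.1 (mem_Iic.not.1 hi)), sub_self, mul_zero]).symm
    _ ≤ ∑ i ∈ Iic m, t i :=
        sum_le_sum fun i _ => mul_le_of_le_one_right (ht i) (by linarith [hc i])

theorem sum_Ioi_lt_sharingDensity [LocallyFiniteOrderTop ι] (ht : ∀ i, 0 < t i)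
    (hρ : ∀ i, 0 < ρ i) (hc : ∀ i, 0 ≤ c i) {m : ι} (hcm : 0 < c m)
    (hlater : ∀ k, m < k → c k = 1) :
    ∑ j ∈ Ioi m, t j * ρ j < sharingDensity t ρ c :=
  calc ∑ j ∈ Ioi m, t j * ρ j = ∑ j ∈ Ioi m, t j * ρ j * c j :=
        sum_congr rfl fun j hj => by rw [hlater j (mem_Ioi.1 hj), mul_one]
    _ < t m * ρ m * c m + ∑ j ∈ Ioi m, t j * ρ j * c j :=
        lt_add_of_pos_left _ (mul_pos (mul_pos (ht m) (hρ m)) hcm)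
    _ = ∑ j ∈ insert m (Ioi m), t j * ρ j * c j := by
        rw [sum_insert notMem_Ioi_self]
    _ ≤ sharingDensity t ρ c :=
        sum_le_sum_of_subset_of_nonneg (subset_univ _) fun i _ _ =>
          mul_nonneg (mul_pos (ht i) (hρ i)).le (hc i)

end Ordered

end Offloading

open Offloading in
theorem stmt_7_general (M : ℕ) (B : ℝ) (hB : 0 < B)
    (t ρ : Fin M → ℝ) (ht : ∀ i, 0 < t i) (hρ : ∀ i, 0 < ρ i ∧ ρ i ≤ 1)
    (hsort : StrictMono ρ) (m : Fin M)
    (hf1 : 1 + B * ρ m * (∑ i ∈ Finset.Iic m, t i) -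
      Real.exp (B * ∑ j ∈ Finset.Ioi m, t j * ρ j) ≤ 0)
    (c : Fin M → ℝ) (hc : ∀ i, 0 ≤ c i ∧ c i ≤ 1)
    (hopt : ∀ d : Fin M → ℝ, (∀ i, 0 ≤ d i ∧ d i ≤ 1) →
      (∑ i, t i * (1 - d i)) * (1 - Real.exp (-B * ∑ k, t k * ρ k * d k)) ≤
      (∑ i, t i * (1 - c i)) * (1 - Real.exp (-B * ∑ k, t k * ρ k * c k))) :
    c m = 0 := by
  by_contra hne
  have hcube : c ∈ Set.Icc 0 1 := ⟨fun i => (hc i).1, fun i => (hc i).2⟩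
  have hmax : IsMaxOn (gain B t ρ) (Set.Icc 0 1) c :=
    isMaxOn_iff.2 fun d hd => hopt d fun i => ⟨hd.1 i, hd.2 i⟩
  have hcm : 0 < c m := (hc m).1.lt_of_ne' hne
  have hlater : ∀ k, m < k → c k = 1 := fun k hk =>
    eq_one_of_isMaxOn hB ht hmax hcube hcm (hsort hk)
  have hmarginal := exp_sub_one_le_of_isMaxOn hmax hcube (ht m) hcm
  have hS := unpushedDemand_le_sum_Iic (fun i => (ht i).le) hcube.1 hlater
  have hT := sum_Ioi_lt_sharingDensity ht (fun i => (hρ i).1) hcube.1 hcm hlater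
  have hexp := exp_lt_exp.2 (mul_lt_mul_of_pos_left hT hB)
  have hρS := mul_le_mul_of_nonneg_left hS (mul_pos hB (hρ m).1).le
  linarith

/-- With sorted sharing probabilities, if `f¹_m ≤ 0` then every
optimal pushing strategy has `c m = 0`. -/
theorem stmt_7 (M : ℕ) (hM : 1 ≤ M) (B : ℝ) (hB : 0 < B)
    (t ρ : Fin M → ℝ) (ht : ∀ i, 0 < t i) (hρ : ∀ i, 0 < ρ i ∧ ρ i ≤ 1)
    (hsort : StrictMono ρ) (m : Fin M)
    (hf1 : 1 + B * ρ m * (∑ i ∈ Finset.Iic m, t i) -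
      Real.exp (B * ∑ j ∈ Finset.Ioi m, t j * ρ j) ≤ 0)
    (c : Fin M → ℝ) (hc : ∀ i, 0 ≤ c i ∧ c i ≤ 1)
    (hopt : ∀ d : Fin M → ℝ, (∀ i, 0 ≤ d i ∧ d i ≤ 1) →
      (∑ i, t i * (1 - d i)) * (1 - Real.exp (-B * ∑ k, t k * ρ k * d k)) ≤
      (∑ i, t i * (1 - c i)) * (1 - Real.exp (-B * ∑ k, t k * ρ k * c k))) :
    c m = 0 :=
  stmt_7_general M B hB t ρ ht hρ hsort m hf1 c hc hopt
end

section
/- Assume the groups are sorted so that ρ_1 < ρ_2 < ⋯ < ρ_M. If the index m satisfies f⁰_m ≤ 0, then every optimal pushing strategy c* has c*_m = 1. -/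
set_option maxHeartbeats 1000000 in

/-- With sorted sharing probabilities, if `f⁰_m ≤ 0` then every
optimal pushing strategy has `c m = 1`. -/
theorem stmt_8 (M : ℕ) (hM : 1 ≤ M) (B : ℝ) (hB : 0 < B)
    (t ρ : Fin M → ℝ) (ht : ∀ i, 0 < t i) (hρ : ∀ i, 0 < ρ i ∧ ρ i ≤ 1)
    (hsort : StrictMono ρ) (m : Fin M)
    (hf0 : Real.exp (B * ∑ j ∈ Finset.Ici m, t j * ρ j) -
      B * ρ m * (∑ i ∈ Finset.Iio m, t i) - 1 ≤ 0)
    (c : Fin M → ℝ) (hc : ∀ i, 0 ≤ c i ∧ c i ≤ 1)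
    (hopt : ∀ d : Fin M → ℝ, (∀ i, 0 ≤ d i ∧ d i ≤ 1) →
      (∑ i, t i * (1 - d i)) * (1 - Real.exp (-B * ∑ k, t k * ρ k * d k)) ≤
      (∑ i, t i * (1 - c i)) * (1 - Real.exp (-B * ∑ k, t k * ρ k * c k))) :
    c m = 1 := by
  obtain ⟨hcm0, hcm1⟩ := hc m
  by_contra hne
  have hcm : c m < 1 := lt_of_le_of_ne hcm1 hne
  have htm : 0 < t m := ht m
  have hρm : 0 < ρ m := (hρ m).1
  have hsplit : ∀ g : Fin M → ℝ,
      ∑ i, g i = ∑ i ∈ Finset.Iio m, g i + ∑ i ∈ Finset.Ici m, g i := by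
    intro g
    rw [← Finset.sum_union (by simp [Finset.disjoint_left])]
    congr 1
    ext x; simp [lt_or_ge]
  by_cases hA : ∃ j, j < m ∧ 0 < c j
  · -- Case A: transfer mass from c j to c m
    obtain ⟨j, hjm, hcj⟩ := hA
    have hjne : j ≠ m := ne_of_lt hjm
    have htj : 0 < t j := ht j
    have hρj : 0 < ρ j := (hρ j).1
    have hρjm : ρ j < ρ m := hsort hjm
    set r : ℝ := (t m * ρ m) / (t j * ρ j) with hr
    have hr0 : 0 < r := div_pos (mul_pos htm hρm) (mul_pos htj hρj)
    set ε : ℝ := min (1 - c m) (c j / r) with hε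
    have hε0 : 0 < ε := lt_min (by linarith) (div_pos hcj hr0)
    have hε1 : ε ≤ 1 - c m := min_le_left _ _
    have hε2 : r * ε ≤ c j := by
      have h := min_le_right (1 - c m) (c j / r)
      have : r * ε ≤ r * (c j / r) := by
        apply mul_le_mul_of_nonneg_left _ hr0.le
        exact h
      rwa [mul_div_cancel₀ _ (ne_of_gt hr0)] at this
    set d : Fin M → ℝ :=
      Function.update (Function.update c j (c j - r * ε)) m (c m + ε) with hd
    have hdm : d m = c m + ε := by simp [hd]
    have hdj : d j = c j - r * ε := by
      simp [hd, Function.update_of_ne hjne]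
    have hdo : ∀ i, i ≠ m → i ≠ j → d i = c i := by
      intro i him hij
      simp [hd, Function.update_of_ne him, Function.update_of_ne hij]
    have hfeas : ∀ i, 0 ≤ d i ∧ d i ≤ 1 := by
      intro i
      by_cases him : i = m
      · subst him
        rw [hdm]
        constructor <;> linarith
      · by_cases hij : i = j
        · subst hij
          rw [hdj]
          have := (hc i).2
          constructor <;> nlinarith [mul_pos hr0 hε0]
        · rw [hdo i him hij]; exact hc i
    have hsum : ∀ g : Fin M → ℝ,
        (∑ i, g i * d i) - (∑ i, g i * c i) = g m * ε - g j * (r * ε) := by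
      intro g
      rw [← Finset.sum_sub_distrib]
      have hsupp : ∀ x ∈ Finset.univ, x ∉ ({m, j} : Finset (Fin M)) →
          g x * d x - g x * c x = 0 := by
        intro x _ hx
        simp only [Finset.mem_insert, Finset.mem_singleton, not_or] at hx
        rw [hdo x hx.1 hx.2]; ring
      rw [← Finset.sum_subset (Finset.subset_univ {m, j}) hsupp]
      rw [Finset.sum_pair (Ne.symm hjne), hdm, hdj]
      ring
    have hTd : (∑ k, t k * ρ k * d k) = ∑ k, t k * ρ k * c k := by
      have h1 := hsum (fun k => t k * ρ k)
      have h2 : t j * ρ j * r = t m * ρ m := by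
        rw [hr, mul_div_cancel₀ _ (ne_of_gt (mul_pos htj hρj))]
      nlinarith [h1]
    have hSd : (∑ i, t i * (1 - d i)) =
        (∑ i, t i * (1 - c i)) + (t j * r - t m) * ε := by
      have h1 := hsum t
      have e1 : (∑ i, t i * (1 - d i)) = (∑ i, t i) - ∑ i, t i * d i := by
        rw [← Finset.sum_sub_distrib]; apply Finset.sum_congr rfl; intros; ring
      have e2 : (∑ i, t i * (1 - c i)) = (∑ i, t i) - ∑ i, t i * c i := by
        rw [← Finset.sum_sub_distrib]; apply Finset.sum_congr rfl; intros; ring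
      rw [e1, e2]; linarith
    have hgain : 0 < (t j * r - t m) * ε := by
      apply mul_pos _ hε0
      have : t j * r = t m * ρ m / ρ j := by
        rw [hr]; field_simp
      rw [this]
      rw [sub_pos, lt_div_iff₀ hρj]
      nlinarith
    have hT0 : 0 < ∑ k, t k * ρ k * c k := by
      have hterm : ∀ i ∈ Finset.univ, 0 ≤ t i * ρ i * c i := fun i _ =>
        mul_nonneg (mul_nonneg (ht i).le (hρ i).1.le) (hc i).1
      have := Finset.single_le_sum hterm (Finset.mem_univ j)
      nlinarith [mul_pos (mul_pos htj hρj) hcj]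
    have hE : 0 < 1 - Real.exp (-B * ∑ k, t k * ρ k * c k) := by
      have : Real.exp (-B * ∑ k, t k * ρ k * c k) < 1 :=
        Real.exp_lt_one_iff.mpr (by nlinarith)
      linarith
    have hle := hopt d hfeas
    rw [hTd, hSd] at hle
    nlinarith [mul_pos hgain hE]
  · -- Case B: all c j = 0 for j < m; push c m to 1
    push_neg at hA
    have hz : ∀ j, j < m → c j = 0 := fun j hj =>
      le_antisymm (hA j hj) (hc j).1
    set ε : ℝ := 1 - c m with hεdef
    have hε0 : 0 < ε := by linarith
    set d : Fin M → ℝ := Function.update c m 1 with hd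
    have hdm : d m = 1 := by simp [hd]
    have hdo : ∀ i, i ≠ m → d i = c i := by
      intro i him; simp [hd, Function.update_of_ne him]
    have hfeas : ∀ i, 0 ≤ d i ∧ d i ≤ 1 := by
      intro i
      by_cases him : i = m
      · subst him; rw [hdm]; norm_num
      · rw [hdo i him]; exact hc i
    have hsum : ∀ g : Fin M → ℝ,
        (∑ i, g i * d i) - (∑ i, g i * c i) = g m * ε := by
      intro g
      rw [← Finset.sum_sub_distrib]
      have hsupp : ∀ x ∈ Finset.univ, x ∉ ({m} : Finset (Fin M)) →
          g x * d x - g x * c x = 0 := by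
        intro x _ hx
        simp only [Finset.mem_singleton] at hx
        rw [hdo x hx]; ring
      rw [← Finset.sum_subset (Finset.subset_univ {m}) hsupp]
      rw [Finset.sum_singleton, hdm]
      ring
    set P : ℝ := ∑ i ∈ Finset.Iio m, t i with hP
    have hP0 : 0 ≤ P := Finset.sum_nonneg fun i _ => (ht i).le
    set Sc : ℝ := ∑ i, t i * (1 - c i) with hSc
    set Tc : ℝ := ∑ k, t k * ρ k * c k with hTc
    -- Sc ≥ P + t m * ε
    have hScge : P + t m * ε ≤ Sc := by
      rw [hSc, hsplit (fun i => t i * (1 - c i))]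
      have h1 : ∑ i ∈ Finset.Iio m, t i * (1 - c i) = P := by
        rw [hP]
        apply Finset.sum_congr rfl
        intro i hi
        rw [hz i (Finset.mem_Iio.mp hi)]; ring
      have h2 : t m * ε ≤ ∑ i ∈ Finset.Ici m, t i * (1 - c i) := by
        have hterm : ∀ i ∈ Finset.Ici m, 0 ≤ t i * (1 - c i) := fun i _ =>
          mul_nonneg (ht i).le (by linarith [(hc i).2])
        have := Finset.single_le_sum hterm (Finset.mem_Ici.mpr le_rfl)
        rw [hεdef]; linarith
      linarith
    -- T d = Tc + t m * ρ m * ε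
    have hTd : (∑ k, t k * ρ k * d k) = Tc + t m * ρ m * ε := by
      have := hsum (fun k => t k * ρ k)
      rw [hTc]; linarith
    have hSd : (∑ i, t i * (1 - d i)) = Sc - t m * ε := by
      have h1 := hsum t
      have e1 : (∑ i, t i * (1 - d i)) = (∑ i, t i) - ∑ i, t i * d i := by
        rw [← Finset.sum_sub_distrib]; apply Finset.sum_congr rfl; intros; ring
      have e2 : Sc = (∑ i, t i) - ∑ i, t i * c i := by
        rw [hSc, ← Finset.sum_sub_distrib]; apply Finset.sum_congr rfl; intros; ring
      rw [e1, e2]; linarith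
    -- bound on T d
    have hTdle : Tc + t m * ρ m * ε ≤ ∑ k ∈ Finset.Ici m, t k * ρ k := by
      have hzero : ∑ k ∈ Finset.Iio m, t k * ρ k * c k = 0 := by
        apply Finset.sum_eq_zero
        intro i hi
        rw [hz i (Finset.mem_Iio.mp hi)]; ring
      have hTceq : Tc = ∑ k ∈ Finset.Ici m, t k * ρ k * c k := by
        rw [hTc, hsplit (fun k => t k * ρ k * c k), hzero]; ring
      rw [hTceq]
      have key : ∑ k ∈ Finset.Ici m, t k * ρ k * c k + t m * ρ m * ε
          ≤ ∑ k ∈ Finset.Ici m, (t k * ρ k * c k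
              + (if k = m then t m * ρ m * ε else 0)) := by
        rw [Finset.sum_add_distrib, Finset.sum_ite_eq' _ m
          (fun _ => t m * ρ m * ε)]
        simp
      refine le_trans key (Finset.sum_le_sum ?_)
      intro k hk
      by_cases hkm : k = m
      · rw [if_pos hkm, hkm]
        have he : t m * ρ m * ε = t m * ρ m - t m * ρ m * c m := by
          rw [hεdef]; ring
        linarith
      · simp only [if_neg hkm, add_zero]
        have := (hc k).2
        nlinarith [mul_pos (ht k) (hρ k).1]
    set u : ℝ := B * Tc with hu
    set w : ℝ := B * (t m * ρ m * ε) with hw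
    have hw0 : 0 < w := by
      rw [hw]; positivity
    have hvQ : Real.exp (u + w) ≤ 1 + B * ρ m * P := by
      have h1 : u + w ≤ B * ∑ k ∈ Finset.Ici m, t k * ρ k := by
        rw [hu, hw]
        nlinarith [hTdle]
      calc Real.exp (u + w) ≤ Real.exp (B * ∑ k ∈ Finset.Ici m, t k * ρ k) :=
            Real.exp_le_exp.mpr h1
        _ ≤ 1 + B * ρ m * P := by linarith [hf0]
    -- key inequality
    have hkey : t m * ε * (Real.exp (u + w) - 1) < Sc * (Real.exp w - 1) := by
      have h1 : w ≤ Real.exp w - 1 := by linarith [Real.add_one_le_exp w]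
      have hSc0 : 0 < Sc := by nlinarith
      have c1 : Sc * w ≤ Sc * (Real.exp w - 1) :=
        mul_le_mul_of_nonneg_left h1 hSc0.le
      have hScP : P < Sc := by nlinarith [mul_pos htm hε0]
      have c2 : P * w < Sc * w := mul_lt_mul_of_pos_right hScP hw0
      have c3 : t m * ε * (Real.exp (u + w) - 1) ≤ t m * ε * (B * ρ m * P) := by
        apply mul_le_mul_of_nonneg_left _ (by positivity)
        linarith [hvQ]
      have c4 : t m * ε * (B * ρ m * P) = P * w := by rw [hw]; ring
      linarith
    have hle := hopt d hfeas
    rw [hSd, hTd] at hle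
    have hru : (-B * Tc) = -u := by rw [hu]; ring
    have hrv : (-B * (Tc + t m * ρ m * ε)) = -(u + w) := by rw [hu, hw]; ring
    rw [hru, hrv] at hle
    -- hle : (Sc - t m * ε) * (1 - exp (-(u+w))) ≤ Sc * (1 - exp (-u))
    have hep : 0 < Real.exp (-(u + w)) := Real.exp_pos _
    have h1 : Real.exp (-(u + w)) * Real.exp w = Real.exp (-u) := by
      rw [← Real.exp_add]
      congr 1
      linarith
    have h2 : Real.exp (-(u + w)) * Real.exp (u + w) = 1 := by
      rw [← Real.exp_add]
      have hz2 : -(u + w) + (u + w) = 0 := by linarith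
      rw [hz2, Real.exp_zero]
    have hm2 : t m * ε * (Real.exp (u + w) - 1) * Real.exp (-(u + w)) <
        Sc * (Real.exp w - 1) * Real.exp (-(u + w)) :=
      mul_lt_mul_of_pos_right hkey hep
    have e1 : t m * ε * (Real.exp (u + w) - 1) * Real.exp (-(u + w)) =
        t m * ε * (1 - Real.exp (-(u + w))) := by
      calc t m * ε * (Real.exp (u + w) - 1) * Real.exp (-(u + w))
          = t m * ε * (Real.exp (-(u + w)) * Real.exp (u + w)
              - Real.exp (-(u + w))) := by ring
        _ = t m * ε * (1 - Real.exp (-(u + w))) := by rw [h2]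
    have e2 : Sc * (Real.exp w - 1) * Real.exp (-(u + w)) =
        Sc * (Real.exp (-u) - Real.exp (-(u + w))) := by
      calc Sc * (Real.exp w - 1) * Real.exp (-(u + w))
          = Sc * (Real.exp (-(u + w)) * Real.exp w - Real.exp (-(u + w))) := by
            ring
        _ = Sc * (Real.exp (-u) - Real.exp (-(u + w))) := by rw [h1]
    rw [e1, e2] at hm2
    nlinarith [hm2, hle]
end

section
/- Assume the groups are sorted so that ρ_1 < ρ_2 < ⋯ < ρ_M, and suppose some index m with 1 ≤ m ≤ M−1 satisfies both f¹_m ≤ 0 and f⁰_{m+1} ≤ 0. Then the vector c defined by c_i = 0 for i ≤ m and c_j = 1 for j > m is an optimal pushing strategy. -/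
private lemma stmt9_aux (B l A S E q : ℝ) (hB : 0 < B) (hl : 0 < l)
    (hS : 0 ≤ S) (hEq : B * l * A = E - 1) (hq : B * l * (S - A) + 1 ≤ q) :
    S * (E - q) ≤ A * (E - 1) := by
  have h1 : S * (B * l * A) = S * (E - 1) := by rw [hEq]
  have h2 : A * (B * l * A) = A * (E - 1) := by rw [hEq]
  nlinarith [h1, h2, mul_le_mul_of_nonneg_left hq hS,
    mul_nonneg (mul_pos hB hl).le (sq_nonneg (S - A))]

private lemma stmt9_aux2 (A S E q : ℝ) (hE : 0 < E)
    (h : S * (E - q) ≤ A * (E - 1)) :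
    S * (1 - q / E) ≤ A * (1 - 1 / E) := by
  have e1 : S * (1 - q / E) = S * (E - q) / E := by field_simp
  have e2 : A * (1 - 1 / E) = A * (E - 1) / E := by field_simp
  rw [e1, e2]
  exact div_le_div_of_nonneg_right h hE.le

/-- With sorted sharing probabilities, if an index `m` (not the last
one) satisfies `f¹_m ≤ 0` and `f⁰_{m+1} ≤ 0`, then the vector that is 0 up to `m`
and 1 after `m` is an optimal pushing strategy. -/
theorem stmt_9 (M : ℕ) (hM : 1 ≤ M) (B : ℝ) (hB : 0 < B)
    (t ρ : Fin M → ℝ) (ht : ∀ i, 0 < t i) (hρ : ∀ i, 0 < ρ i ∧ ρ i ≤ 1)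
    (hsort : StrictMono ρ) (m : Fin M) (hm : (m : ℕ) + 1 < M)
    (hf1 : 1 + B * ρ m * (∑ i ∈ Finset.Iic m, t i) -
      Real.exp (B * ∑ j ∈ Finset.Ioi m, t j * ρ j) ≤ 0)
    (hf0 : Real.exp (B * ∑ j ∈ Finset.Ici (⟨(m : ℕ) + 1, hm⟩ : Fin M), t j * ρ j) -
      B * ρ (⟨(m : ℕ) + 1, hm⟩ : Fin M) *
        (∑ i ∈ Finset.Iio (⟨(m : ℕ) + 1, hm⟩ : Fin M), t i) - 1 ≤ 0) :
    (∀ i : Fin M, 0 ≤ (if i ≤ m then (0 : ℝ) else 1) ∧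
      (if i ≤ m then (0 : ℝ) else 1) ≤ 1) ∧
    (∀ d : Fin M → ℝ, (∀ i, 0 ≤ d i ∧ d i ≤ 1) →
      (∑ i, t i * (1 - d i)) * (1 - Real.exp (-B * ∑ k, t k * ρ k * d k)) ≤
      (∑ i, t i * (1 - if i ≤ m then (0 : ℝ) else 1)) *
        (1 - Real.exp (-B * ∑ k, t k * ρ k * (if k ≤ m then (0 : ℝ) else 1)))) := by
  have hIci : Finset.Ici (⟨(m : ℕ) + 1, hm⟩ : Fin M) = Finset.Ioi m := by
    ext x
    simp only [Finset.mem_Ici, Finset.mem_Ioi, Fin.le_def, Fin.lt_def]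
    omega
  have hIio : Finset.Iio (⟨(m : ℕ) + 1, hm⟩ : Fin M) = Finset.Iic m := by
    ext x
    simp only [Finset.mem_Iio, Finset.mem_Iic, Fin.le_def, Fin.lt_def]
    omega
  rw [hIci, hIio] at hf0
  constructor
  · intro i; split_ifs <;> norm_num
  · intro d hd
    set A : ℝ := ∑ i ∈ Finset.Iic m, t i with hA
    set R : ℝ := ∑ j ∈ Finset.Ioi m, t j * ρ j with hR
    have hApos : 0 < A := Finset.sum_pos (fun i _ => ht i) ⟨m, Finset.mem_Iic.2 le_rfl⟩
    set E : ℝ := Real.exp (B * R) with hE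
    have hEpos : 0 < E := Real.exp_pos _
    have hBA : 0 < B * A := mul_pos hB hApos
    set l : ℝ := (E - 1) / (B * A) with hl
    have hlA : B * l * A = E - 1 := by
      rw [hl]; field_simp
    have hlo : ρ m ≤ l := by
      rw [hl, le_div_iff₀ hBA]; nlinarith
    have hhi : l ≤ ρ (⟨(m : ℕ) + 1, hm⟩ : Fin M) := by
      rw [hl, div_le_iff₀ hBA]; nlinarith
    have hlpos : 0 < l := lt_of_lt_of_le (hρ m).1 hlo
    have hfil : Finset.Iic m = Finset.univ.filter (· ≤ m) := by ext x; simp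
    have hfil2 : Finset.Ioi m = Finset.univ.filter (m < ·) := by ext x; simp
    have h1 : ∑ i, t i * (1 - if i ≤ m then (0:ℝ) else 1) = A := by
      rw [hA, hfil, Finset.sum_filter]
      apply Finset.sum_congr rfl; intro i _
      rcases le_or_gt i m with h | h
      · simp [h]
      · simp [not_le.mpr h]
    have h2 : ∑ k, t k * ρ k * (if k ≤ m then (0:ℝ) else 1) = R := by
      rw [hR, hfil2, Finset.sum_filter]
      apply Finset.sum_congr rfl; intro k _
      rcases le_or_gt k m with h | h
      · simp [h, not_lt.mpr h]
      · simp [not_le.mpr h, h]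
    rw [h1, h2]
    set S : ℝ := ∑ i, t i * (1 - d i) with hS
    set T : ℝ := ∑ k, t k * ρ k * d k with hT
    have hSnn : 0 ≤ S :=
      Finset.sum_nonneg fun i _ => mul_nonneg (ht i).le (by linarith [(hd i).2])
    -- key inequality : T - R - l*(A - S) ≤ 0
    have key : T - R - l * (A - S) ≤ 0 := by
      have hrepr : T - R - l * (A - S) =
          ∑ i, (if i ≤ m then (ρ i - l) * (t i * d i)
                else (l - ρ i) * (t i * (1 - d i))) := by
        rw [hT, hR, hA, hS, hfil, hfil2, Finset.sum_filter, Finset.sum_filter]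
        rw [mul_sub, Finset.mul_sum, Finset.mul_sum,
          ← Finset.sum_sub_distrib, ← Finset.sum_sub_distrib, ← Finset.sum_sub_distrib]
        apply Finset.sum_congr rfl; intro i _
        rcases le_or_gt i m with h | h
        · simp only [h, if_pos, not_lt.mpr h, if_neg, not_false_iff]
          ring
        · simp only [not_le.mpr h, if_neg, not_false_iff, h, if_pos]
          ring
      rw [hrepr]
      apply Finset.sum_nonpos
      intro i _
      split_ifs with h
      · have hρi : ρ i ≤ l := le_trans (hsort.monotone h) hlo
        have h2 : 0 ≤ t i * d i := mul_nonneg (ht i).le (hd i).1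
        nlinarith
      · have hle : (⟨(m : ℕ) + 1, hm⟩ : Fin M) ≤ i := by
          simp only [Fin.le_def]
          have := not_le.mp h
          simp only [Fin.lt_def] at this
          omega
        have hρi : l ≤ ρ i := le_trans hhi (hsort.monotone hle)
        have h2 : 0 ≤ t i * (1 - d i) := mul_nonneg (ht i).le (by linarith [(hd i).2])
        nlinarith
    -- step 1 : monotonicity in T
    have step1 : S * (1 - Real.exp (-B * T)) ≤ S * (1 - Real.exp (-B * (R + l * (A - S)))) := by
      apply mul_le_mul_of_nonneg_left _ hSnn
      have hTle : T ≤ R + l * (A - S) := by linarith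
      have hmul : B * T ≤ B * (R + l * (A - S)) :=
        mul_le_mul_of_nonneg_left hTle hB.le
      have : Real.exp (-B * (R + l * (A - S))) ≤ Real.exp (-B * T) := by
        apply Real.exp_le_exp.2; linarith
      linarith
    -- step 2 : one-dimensional bound
    have step2 : S * (1 - Real.exp (-B * (R + l * (A - S)))) ≤ A * (1 - Real.exp (-B * R)) := by
      have hq : Real.exp (-B * (R + l * (A - S))) = Real.exp (B * l * (S - A)) / E := by
        rw [hE, ← Real.exp_sub]; ring_nf
      have hEinv : Real.exp (-B * R) = 1 / E := by
        have hneg : -B * R = -(B * R) := by ring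
        rw [hneg, Real.exp_neg, hE, one_div]
      rw [hq, hEinv]
      have hqge : B * l * (S - A) + 1 ≤ Real.exp (B * l * (S - A)) :=
        Real.add_one_le_exp _
      exact stmt9_aux2 A S E _ hEpos
        (stmt9_aux B l A S E _ hB hlpos hSnn hlA hqge)
    linarith
end

section
/- Assume the groups are sorted so that ρ_1 < ρ_2 < ⋯ < ρ_M. Then there is at most one index m ∈ {1,…,M} that satisfies both inequalities f¹_m > 0 and f⁰_m > 0 simultaneously. -/
lemma stmt_10_aux (M : ℕ) (B : ℝ) (hB : 0 < B)
    (t ρ : Fin M → ℝ) (ht : ∀ i, 0 < t i) (hρ : ∀ i, 0 < ρ i ∧ ρ i ≤ 1)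
    (hsort : StrictMono ρ) (m k : Fin M) (hmk : m < k)
    (h1 : 0 < 1 + B * ρ m * (∑ i ∈ Finset.Iic m, t i) -
          Real.exp (B * ∑ j ∈ Finset.Ioi m, t j * ρ j))
    (h0 : 0 < Real.exp (B * ∑ j ∈ Finset.Ici k, t j * ρ j) -
          B * ρ k * (∑ i ∈ Finset.Iio k, t i) - 1) : False := by
  have hS : 0 < ∑ i ∈ Finset.Iic m, t i :=
    Finset.sum_pos (fun i _ => ht i) ⟨m, Finset.mem_Iic.mpr le_rfl⟩
  have hsub1 : Finset.Ici k ⊆ Finset.Ioi m := fun j hj =>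
    Finset.mem_Ioi.mpr (lt_of_lt_of_le hmk (Finset.mem_Ici.mp hj))
  have hsub2 : Finset.Iic m ⊆ Finset.Iio k := fun i hi =>
    Finset.mem_Iio.mpr (lt_of_le_of_lt (Finset.mem_Iic.mp hi) hmk)
  have e1 : Real.exp (B * ∑ j ∈ Finset.Ici k, t j * ρ j) ≤
      Real.exp (B * ∑ j ∈ Finset.Ioi m, t j * ρ j) :=
    Real.exp_le_exp.mpr (mul_le_mul_of_nonneg_left
      (Finset.sum_le_sum_of_subset_of_nonneg hsub1
        (fun j _ _ => mul_nonneg (ht j).le (hρ j).1.le)) hB.le)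
  have e2 : (∑ i ∈ Finset.Iic m, t i) ≤ ∑ i ∈ Finset.Iio k, t i :=
    Finset.sum_le_sum_of_subset_of_nonneg hsub2 (fun i _ _ => (ht i).le)
  have hρmk : ρ m < ρ k := hsort hmk
  have h3 : (0:ℝ) < ρ m := (hρ m).1
  have h4 : (0:ℝ) < ρ k := (hρ k).1
  nlinarith [mul_le_mul_of_nonneg_left e2 (mul_pos hB h4).le,
    mul_lt_mul_of_pos_right (mul_lt_mul_of_pos_left hρmk hB) hS]

/-- With sorted sharing probabilities, at most one index `m`
satisfies both `f¹_m > 0` and `f⁰_m > 0`. -/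
theorem stmt_10 (M : ℕ) (hM : 1 ≤ M) (B : ℝ) (hB : 0 < B)
    (t ρ : Fin M → ℝ) (ht : ∀ i, 0 < t i) (hρ : ∀ i, 0 < ρ i ∧ ρ i ≤ 1)
    (hsort : StrictMono ρ) :
    ∀ m k : Fin M,
      (0 < 1 + B * ρ m * (∑ i ∈ Finset.Iic m, t i) -
          Real.exp (B * ∑ j ∈ Finset.Ioi m, t j * ρ j) ∧
        0 < Real.exp (B * ∑ j ∈ Finset.Ici m, t j * ρ j) -
          B * ρ m * (∑ i ∈ Finset.Iio m, t i) - 1) →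
      (0 < 1 + B * ρ k * (∑ i ∈ Finset.Iic k, t i) -
          Real.exp (B * ∑ j ∈ Finset.Ioi k, t j * ρ j) ∧
        0 < Real.exp (B * ∑ j ∈ Finset.Ici k, t j * ρ j) -
          B * ρ k * (∑ i ∈ Finset.Iio k, t i) - 1) →
      m = k := by
  intro m k hm hk
  by_contra hne
  rcases lt_or_gt_of_ne hne with h | h
  · exact stmt_10_aux M B hB t ρ ht hρ hsort m k h hm.1 hk.2
  · exact stmt_10_aux M B hB t ρ ht hρ hsort k m h hk.1 hm.2
end

section
/- Suppose two distinct indices k₁ ≠ k₂ have the same sharing probability ρ_{k₁} = ρ_{k₂}. Let c and c' be two vectors in the feasible cube that agree in every coordinate outside {k₁, k₂} and satisfy t_{k₁} c_{k₁} + t_{k₂} c_{k₂} = t_{k₁} c'_{k₁} + t_{k₂} c'_{k₂}. Then G_f(c) = G_f(c'); in particular, if c is an optimal pushing strategy then so is c', so the optimal pushing probabilities of groups with equal sharing probability are not unique. -/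
lemma sum_two_swap {M : ℕ} (k₁ k₂ : Fin M) (hk : k₁ ≠ k₂) (f g : Fin M → ℝ)
    (hagree : ∀ i : Fin M, i ≠ k₁ → i ≠ k₂ → f i = g i)
    (h2 : f k₁ + f k₂ = g k₁ + g k₂) : ∑ i, f i = ∑ i, g i := by
  have hmem1 : k₁ ∈ (Finset.univ : Finset (Fin M)) := Finset.mem_univ _
  have hmem2 : k₂ ∈ Finset.univ.erase k₁ :=
    Finset.mem_erase.mpr ⟨fun h => hk h.symm, Finset.mem_univ _⟩
  have ef : ∑ i, f i = f k₁ + (f k₂ + ∑ i ∈ (Finset.univ.erase k₁).erase k₂, f i) := by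
    rw [Finset.add_sum_erase _ f hmem2, Finset.add_sum_erase _ f hmem1]
  have eg : ∑ i, g i = g k₁ + (g k₂ + ∑ i ∈ (Finset.univ.erase k₁).erase k₂, g i) := by
    rw [Finset.add_sum_erase _ g hmem2, Finset.add_sum_erase _ g hmem1]
  have hcong : ∑ i ∈ (Finset.univ.erase k₁).erase k₂, f i
      = ∑ i ∈ (Finset.univ.erase k₁).erase k₂, g i := by
    refine Finset.sum_congr rfl fun i hi => ?_
    have h1 := (Finset.mem_erase.mp hi).1
    have h2' := (Finset.mem_erase.mp (Finset.mem_erase.mp hi).2).1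
    exact hagree i h2' h1
  rw [ef, eg, hcong, ← add_assoc, ← add_assoc, h2]

/-- If two distinct groups have equal sharing probability, then two
feasible strategies agreeing outside these two groups and having the same weighted
pushing mass on them achieve the same offloading gain; in particular if one is
optimal so is the other (non-uniqueness). -/
theorem stmt_11 (M : ℕ) (hM : 1 ≤ M) (B : ℝ) (hB : 0 < B)
    (t ρ : Fin M → ℝ) (ht : ∀ i, 0 < t i) (hρ : ∀ i, 0 < ρ i ∧ ρ i ≤ 1)
    (k₁ k₂ : Fin M) (hk : k₁ ≠ k₂) (hρeq : ρ k₁ = ρ k₂)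
    (c c' : Fin M → ℝ)
    (hc : ∀ i, 0 ≤ c i ∧ c i ≤ 1) (hc' : ∀ i, 0 ≤ c' i ∧ c' i ≤ 1)
    (hagree : ∀ i : Fin M, i ≠ k₁ → i ≠ k₂ → c i = c' i)
    (hmass : t k₁ * c k₁ + t k₂ * c k₂ = t k₁ * c' k₁ + t k₂ * c' k₂) :
    (∑ i, t i * (1 - c i)) * (1 - Real.exp (-B * ∑ k, t k * ρ k * c k)) =
      (∑ i, t i * (1 - c' i)) * (1 - Real.exp (-B * ∑ k, t k * ρ k * c' k)) ∧
    ((∀ d : Fin M → ℝ, (∀ i, 0 ≤ d i ∧ d i ≤ 1) →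
        (∑ i, t i * (1 - d i)) * (1 - Real.exp (-B * ∑ k, t k * ρ k * d k)) ≤
        (∑ i, t i * (1 - c i)) * (1 - Real.exp (-B * ∑ k, t k * ρ k * c k))) →
      (∀ d : Fin M → ℝ, (∀ i, 0 ≤ d i ∧ d i ≤ 1) →
        (∑ i, t i * (1 - d i)) * (1 - Real.exp (-B * ∑ k, t k * ρ k * d k)) ≤
        (∑ i, t i * (1 - c' i)) * (1 - Real.exp (-B * ∑ k, t k * ρ k * c' k)))) := by
  have h1 : ∑ i, t i * (1 - c i) = ∑ i, t i * (1 - c' i) := by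
    apply sum_two_swap k₁ k₂ hk _ _ (fun i h1 h2 => by rw [hagree i h1 h2])
    linear_combination -hmass
  have h2 : ∑ i, t i * ρ i * c i = ∑ i, t i * ρ i * c' i := by
    apply sum_two_swap k₁ k₂ hk _ _ (fun i h1 h2 => by rw [hagree i h1 h2])
    rw [hρeq]
    linear_combination ρ k₂ * hmass
  have hmain : (∑ i, t i * (1 - c i)) * (1 - Real.exp (-B * ∑ k, t k * ρ k * c k)) =
      (∑ i, t i * (1 - c' i)) * (1 - Real.exp (-B * ∑ k, t k * ρ k * c' k)) := by
    rw [h1, h2]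
  exact ⟨hmain, fun hopt d hd => hmain ▸ hopt d hd⟩
end

section
/- Assume the groups are sorted so that ρ_1 < ρ_2 < ⋯ < ρ_M and that the index m satisfies both f¹_m > 0 and f⁰_m > 0 for the densities t. If t' agrees with t in every coordinate except t'_m > t_m, then the index m also satisfies both f¹_m > 0 and f⁰_m > 0 when computed with the densities t'; that is, increasing the request density of the watershed group leaves it the watershed group. -/
/-- With sorted sharing probabilities, if index `m` satisfies
`f¹_m > 0` and `f⁰_m > 0` for densities `t`, and `t'` agrees with `t` except for a
larger value at `m`, then `m` still satisfies both conditions for `t'`: increasing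
the request density of the watershed group keeps it the watershed group. -/
theorem stmt_13 (M : ℕ) (hM : 1 ≤ M) (B : ℝ) (hB : 0 < B)
    (t ρ : Fin M → ℝ) (ht : ∀ i, 0 < t i) (hρ : ∀ i, 0 < ρ i ∧ ρ i ≤ 1)
    (hsort : StrictMono ρ) (m : Fin M)
    (hf1 : 0 < 1 + B * ρ m * (∑ i ∈ Finset.Iic m, t i) -
      Real.exp (B * ∑ j ∈ Finset.Ioi m, t j * ρ j))
    (hf0 : 0 < Real.exp (B * ∑ j ∈ Finset.Ici m, t j * ρ j) -
      B * ρ m * (∑ i ∈ Finset.Iio m, t i) - 1)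
    (t' : Fin M → ℝ) (hagree : ∀ i : Fin M, i ≠ m → t' i = t i)
    (hinc : t m < t' m) :
    0 < 1 + B * ρ m * (∑ i ∈ Finset.Iic m, t' i) -
      Real.exp (B * ∑ j ∈ Finset.Ioi m, t' j * ρ j) ∧
    0 < Real.exp (B * ∑ j ∈ Finset.Ici m, t' j * ρ j) -
      B * ρ m * (∑ i ∈ Finset.Iio m, t' i) - 1 := by
  have hne_lt : ∀ i ∈ Finset.Iio m, t' i = t i := fun i hi =>
    hagree i (ne_of_lt (Finset.mem_Iio.mp hi))
  have hne_gt : ∀ i ∈ Finset.Ioi m, t' i = t i := fun i hi =>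
    hagree i (ne_of_gt (Finset.mem_Ioi.mp hi))
  have hIio : ∑ i ∈ Finset.Iio m, t' i = ∑ i ∈ Finset.Iio m, t i :=
    Finset.sum_congr rfl hne_lt
  have hIoi : ∑ j ∈ Finset.Ioi m, t' j * ρ j = ∑ j ∈ Finset.Ioi m, t j * ρ j :=
    Finset.sum_congr rfl fun j hj => by rw [hne_gt j hj]
  have hmIio : m ∉ Finset.Iio m := by simp
  have hmIoi : m ∉ Finset.Ioi m := by simp
  have hIic : ∑ i ∈ Finset.Iic m, t' i = t' m + ∑ i ∈ Finset.Iio m, t i := by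
    rw [← Finset.Iio_insert, Finset.sum_insert hmIio, hIio]
  have hIic' : ∑ i ∈ Finset.Iic m, t i = t m + ∑ i ∈ Finset.Iio m, t i := by
    rw [← Finset.Iio_insert, Finset.sum_insert hmIio]
  have hIci : ∑ j ∈ Finset.Ici m, t' j * ρ j
      = t' m * ρ m + ∑ j ∈ Finset.Ioi m, t j * ρ j := by
    rw [← Finset.Ioi_insert, Finset.sum_insert hmIoi, hIoi]
  have hIci' : ∑ j ∈ Finset.Ici m, t j * ρ j
      = t m * ρ m + ∑ j ∈ Finset.Ioi m, t j * ρ j := by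
    rw [← Finset.Ioi_insert, Finset.sum_insert hmIoi]
  have hρm := (hρ m).1
  have hpos : 0 < B * ρ m * (t' m - t m) :=
    mul_pos (mul_pos hB hρm) (sub_pos.mpr hinc)
  constructor
  · rw [hIic, hIoi]
    rw [hIic'] at hf1
    nlinarith [hpos]
  · rw [hIci, hIio]
    have hexp : Real.exp (B * (t m * ρ m + ∑ j ∈ Finset.Ioi m, t j * ρ j))
        < Real.exp (B * (t' m * ρ m + ∑ j ∈ Finset.Ioi m, t j * ρ j)) := by
      apply Real.exp_lt_exp.mpr
      have : t m * ρ m < t' m * ρ m := by nlinarith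
      nlinarith
    rw [hIci'] at hf0
    linarith
end

section
/- Fix an index k and an index m < k, and let t' agree with the densities t in every coordinate except t'_m > t_m. Suppose x ∈ (0,1) satisfies the watershed equation at index k with densities t, and x' ∈ (0,1) satisfies the watershed equation at index k with densities t'. Then x' > x; that is, increasing the request density of a zero-pushing group above the watershed strictly increases the watershed group's pushing probability. -/
/-- If `m < k` and the densities are increased only at `m`, and
`x, x' ∈ (0,1)` satisfy the watershed equation at `k` for the old and new densities
respectively, then `x' > x`: increasing the request density of a zero-pushing group
above the watershed strictly increases the watershed group's pushing probability. -/
theorem stmt_14 (M : ℕ) (hM : 1 ≤ M) (B : ℝ) (hB : 0 < B)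
    (t ρ : Fin M → ℝ) (ht : ∀ i, 0 < t i) (hρ : ∀ i, 0 < ρ i ∧ ρ i ≤ 1)
    (k m : Fin M) (hmk : m < k)
    (t' : Fin M → ℝ) (hagree : ∀ i : Fin M, i ≠ m → t' i = t i)
    (hinc : t m < t' m)
    (x x' : ℝ) (hx : 0 < x ∧ x < 1) (hx' : 0 < x' ∧ x' < 1)
    (hw : B * ρ k * ((∑ i ∈ Finset.Iic k, t i) - t k * x) + 1 =
      Real.exp (B * (∑ j ∈ Finset.Ioi k, t j * ρ j) + B * t k * ρ k * x))
    (hw' : B * ρ k * ((∑ i ∈ Finset.Iic k, t' i) - t' k * x') + 1 =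
      Real.exp (B * (∑ j ∈ Finset.Ioi k, t' j * ρ j) + B * t' k * ρ k * x')) :
    x < x' := by
  obtain ⟨hx0, hx1⟩ := hx
  obtain ⟨hx'0, hx'1⟩ := hx'
  have hρk := (hρ k).1
  have htk := ht k
  have htk' : t' k = t k := hagree k hmk.ne'
  have hIoi : (∑ j ∈ Finset.Ioi k, t' j * ρ j) = ∑ j ∈ Finset.Ioi k, t j * ρ j := by
    refine Finset.sum_congr rfl fun j hj => ?_
    rw [hagree j (hmk.trans (Finset.mem_Ioi.mp hj)).ne']
  have hIic : (∑ i ∈ Finset.Iic k, t i) < ∑ i ∈ Finset.Iic k, t' i := by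
    refine Finset.sum_lt_sum (fun i _ => ?_) ⟨m, Finset.mem_Iic.mpr hmk.le, hinc⟩
    by_cases h : i = m
    · subst h; exact hinc.le
    · rw [hagree i h]
  rw [htk', hIoi] at hw'
  by_contra h
  push_neg at h
  have hc : 0 < B * t k * ρ k := by positivity
  have hexp : Real.exp (B * (∑ j ∈ Finset.Ioi k, t j * ρ j) + B * t k * ρ k * x')
      ≤ Real.exp (B * (∑ j ∈ Finset.Ioi k, t j * ρ j) + B * t k * ρ k * x) := by
    exact Real.exp_le_exp.mpr (by nlinarith)
  nlinarith [mul_lt_mul_of_pos_left hIic (mul_pos hB hρk)]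
end

section
/- Let ρ' agree with the sharing probabilities ρ in every coordinate except one index m, where 0 < ρ'_m ≤ ρ_m. If c* is an optimal pushing strategy for the parameters ρ and c*_m = 0, then c* is also an optimal pushing strategy for the parameters ρ'; that is, the optimal pushing strategy is unchanged when the sharing probability of a group receiving no pushing is decreased. -/
/-- If `ρ'` agrees with `ρ` except at an index `m` where
`0 < ρ' m ≤ ρ m`, and `c` is an optimal pushing strategy for `ρ` with `c m = 0`,
then `c` is also an optimal pushing strategy for `ρ'`: decreasing the sharing
probability of a group receiving no pushing leaves the optimum unchanged. -/
theorem stmt_15 (M : ℕ) (hM : 1 ≤ M) (B : ℝ) (hB : 0 < B)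
    (t ρ : Fin M → ℝ) (ht : ∀ i, 0 < t i) (hρ : ∀ i, 0 < ρ i ∧ ρ i ≤ 1)
    (m : Fin M) (ρ' : Fin M → ℝ)
    (hagree : ∀ i : Fin M, i ≠ m → ρ' i = ρ i)
    (hρ'm : 0 < ρ' m ∧ ρ' m ≤ ρ m)
    (c : Fin M → ℝ) (hc : ∀ i, 0 ≤ c i ∧ c i ≤ 1)
    (hopt : ∀ d : Fin M → ℝ, (∀ i, 0 ≤ d i ∧ d i ≤ 1) →
      (∑ i, t i * (1 - d i)) * (1 - Real.exp (-B * ∑ k, t k * ρ k * d k)) ≤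
      (∑ i, t i * (1 - c i)) * (1 - Real.exp (-B * ∑ k, t k * ρ k * c k)))
    (hcm : c m = 0) :
    ∀ d : Fin M → ℝ, (∀ i, 0 ≤ d i ∧ d i ≤ 1) →
      (∑ i, t i * (1 - d i)) * (1 - Real.exp (-B * ∑ k, t k * ρ' k * d k)) ≤
      (∑ i, t i * (1 - c i)) * (1 - Real.exp (-B * ∑ k, t k * ρ' k * c k)) := by
  intro d hd
  have hρm := (hρ m).1
  -- RHS exponents agree since c m = 0
  have hcsum : (∑ k, t k * ρ' k * c k) = ∑ k, t k * ρ k * c k := by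
    apply Finset.sum_congr rfl
    intro k _
    by_cases hk : k = m
    · subst hk; simp [hcm]
    · rw [hagree k hk]
  -- define modified strategy e
  set e : Fin M → ℝ := fun i => if i = m then d m * ρ' m / ρ m else d i with he
  have he_bounds : ∀ i, 0 ≤ e i ∧ e i ≤ 1 := by
    intro i
    by_cases hi : i = m
    · rw [hi]
      simp only [he, if_pos rfl]
      constructor
      · have h1 := (hd m).1
        have h2 := hρ'm.1
        positivity
      · rw [div_le_one hρm]
        calc d m * ρ' m ≤ 1 * ρ m := by
              apply mul_le_mul (hd m).2 hρ'm.2 (le_of_lt hρ'm.1) zero_le_one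
          _ = ρ m := one_mul _
    · simp only [he, if_neg hi]; exact hd i
  have hsum_eq : (∑ k, t k * ρ' k * d k) = ∑ k, t k * ρ k * e k := by
    apply Finset.sum_congr rfl
    intro k _
    by_cases hk : k = m
    · rw [hk]
      simp only [he, if_pos rfl]
      field_simp
    · simp only [he, if_neg hk, hagree k hk]
  have hem : e m ≤ d m := by
    simp only [he, if_pos rfl]
    rw [div_le_iff₀ hρm]
    exact mul_le_mul_of_nonneg_left hρ'm.2 (hd m).1
  -- nonnegativity of the exponential factor
  have hS : 0 ≤ ∑ k, t k * ρ' k * d k := by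
    apply Finset.sum_nonneg
    intro k _
    have hρ'k : 0 < ρ' k := by
      by_cases hk : k = m
      · subst hk; exact hρ'm.1
      · rw [hagree k hk]; exact (hρ k).1
    have h3 := (hd k).1
    have h4 := (ht k).le
    positivity
  have hexp : 0 ≤ 1 - Real.exp (-B * ∑ k, t k * ρ' k * d k) := by
    have : Real.exp (-B * ∑ k, t k * ρ' k * d k) ≤ 1 := by
      rw [Real.exp_le_one_iff]
      have : 0 ≤ B * ∑ k, t k * ρ' k * d k := mul_nonneg hB.le hS
      linarith
    linarith
  have hsum1 : (∑ i, t i * (1 - d i)) ≤ ∑ i, t i * (1 - e i) := by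
    apply Finset.sum_le_sum
    intro i _
    by_cases hi : i = m
    · rw [hi]
      apply mul_le_mul_of_nonneg_left _ (ht m).le
      linarith
    · simp only [he, if_neg hi]
      exact le_rfl
  calc (∑ i, t i * (1 - d i)) * (1 - Real.exp (-B * ∑ k, t k * ρ' k * d k))
      ≤ (∑ i, t i * (1 - e i)) * (1 - Real.exp (-B * ∑ k, t k * ρ' k * d k)) :=
        mul_le_mul_of_nonneg_right hsum1 hexp
    _ = (∑ i, t i * (1 - e i)) * (1 - Real.exp (-B * ∑ k, t k * ρ k * e k)) := by
        rw [hsum_eq]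
    _ ≤ (∑ i, t i * (1 - c i)) * (1 - Real.exp (-B * ∑ k, t k * ρ k * c k)) :=
        hopt e he_bounds
    _ = (∑ i, t i * (1 - c i)) * (1 - Real.exp (-B * ∑ k, t k * ρ' k * c k)) := by
        rw [hcsum]
end

section
/- Fix an index k and an index m > k, and let the parameter pair (t', ρ') agree with (t, ρ) in every coordinate except that either t'_m > t_m (with ρ'_m = ρ_m) or ρ'_m > ρ_m (with t'_m = t_m). Suppose x ∈ (0,1) satisfies the watershed equation at index k with parameters (t, ρ), and x' ∈ (0,1) satisfies the watershed equation at index k with parameters (t', ρ'). Then x' < x; that is, increasing the request density or sharing probability of an all-pushing group below the watershed strictly decreases the watershed group's pushing probability. -/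
/-- If `k < m` and the parameters are increased only at `m` (either a
larger density or a larger sharing probability), and `x, x' ∈ (0,1)` satisfy the
watershed equation at `k` for the old and new parameters respectively, then
`x' < x`: increasing the request density or sharing probability of an all-pushing
group below the watershed strictly decreases the watershed pushing probability. -/
theorem stmt_16 (M : ℕ) (hM : 1 ≤ M) (B : ℝ) (hB : 0 < B)
    (t ρ : Fin M → ℝ) (ht : ∀ i, 0 < t i) (hρ : ∀ i, 0 < ρ i ∧ ρ i ≤ 1)
    (k m : Fin M) (hkm : k < m)
    (t' ρ' : Fin M → ℝ)
    (hagree : ∀ i : Fin M, i ≠ m → t' i = t i ∧ ρ' i = ρ i)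
    (hinc : (t m < t' m ∧ ρ' m = ρ m) ∨ (ρ m < ρ' m ∧ t' m = t m))
    (x x' : ℝ) (hx : 0 < x ∧ x < 1) (hx' : 0 < x' ∧ x' < 1)
    (hw : B * ρ k * ((∑ i ∈ Finset.Iic k, t i) - t k * x) + 1 =
      Real.exp (B * (∑ j ∈ Finset.Ioi k, t j * ρ j) + B * t k * ρ k * x))
    (hw' : B * ρ' k * ((∑ i ∈ Finset.Iic k, t' i) - t' k * x') + 1 =
      Real.exp (B * (∑ j ∈ Finset.Ioi k, t' j * ρ' j) + B * t' k * ρ' k * x')) :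
    x' < x := by
  obtain ⟨hx0, hx1⟩ := hx
  obtain ⟨hx'0, hx'1⟩ := hx'
  have hkne : k ≠ m := ne_of_lt hkm
  obtain ⟨htk, hρk⟩ := hagree k hkne
  have hCsum : ∑ i ∈ Finset.Iic k, t' i = ∑ i ∈ Finset.Iic k, t i := by
    refine Finset.sum_congr rfl fun i hi => ?_
    refine (hagree i ?_).1
    intro h; subst h
    exact absurd (Finset.mem_Iic.mp hi) (not_le.mpr hkm)
  have hS : (∑ j ∈ Finset.Ioi k, t j * ρ j) < ∑ j ∈ Finset.Ioi k, t' j * ρ' j := by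
    apply Finset.sum_lt_sum
    · intro i hi
      by_cases h : i = m
      · subst h
        rcases hinc with ⟨h1, h2⟩ | ⟨h1, h2⟩
        · rw [h2]; exact le_of_lt (mul_lt_mul_of_pos_right h1 (hρ i).1)
        · rw [h2]; exact le_of_lt (mul_lt_mul_of_pos_left h1 (ht i))
      · obtain ⟨e1, e2⟩ := hagree i h; rw [e1, e2]
    · refine ⟨m, Finset.mem_Ioi.mpr hkm, ?_⟩
      rcases hinc with ⟨h1, h2⟩ | ⟨h1, h2⟩
      · rw [h2]; exact mul_lt_mul_of_pos_right h1 (hρ m).1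
      · rw [h2]; exact mul_lt_mul_of_pos_left h1 (ht m)
  by_contra hle
  push_neg at hle
  have hρkpos : 0 < ρ k := (hρ k).1
  have htkpos : 0 < t k := ht k
  rw [htk, hρk, hCsum] at hw'
  have h1 : B * ρ k * ((∑ i ∈ Finset.Iic k, t i) - t k * x') + 1
      ≤ B * ρ k * ((∑ i ∈ Finset.Iic k, t i) - t k * x) + 1 := by
    have hmul : t k * x ≤ t k * x' := mul_le_mul_of_nonneg_left hle htkpos.le
    nlinarith [mul_pos hB hρkpos]
  have h2 : Real.exp (B * (∑ j ∈ Finset.Ioi k, t j * ρ j) + B * t k * ρ k * x)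
      ≤ Real.exp (B * (∑ j ∈ Finset.Ioi k, t j * ρ j) + B * t k * ρ k * x') := by
    apply Real.exp_le_exp.mpr
    nlinarith [mul_pos (mul_pos hB htkpos) hρkpos]
  have h3 : Real.exp (B * (∑ j ∈ Finset.Ioi k, t j * ρ j) + B * t k * ρ k * x')
      < Real.exp (B * (∑ j ∈ Finset.Ioi k, t' j * ρ' j) + B * t k * ρ k * x') := by
    apply Real.exp_lt_exp.mpr
    nlinarith
  linarith [hw, hw', h1, h2, h3]
end

section
/- The function G₋ₘ is strictly concave on the interval [0,1]; in particular its second derivative G₋ₘ''(x) = −B t_m² ρⁱ_m exp(−B t_m ρⁱ_m x − φ_m)(2 + B t_m ρⁱ_m (1 − x)) − (B t_m ρᵒ_m)² ∑_{k≠m} Q_k exp(−B t_m ρᵒ_m x − Φ_k) is strictly negative for every x ∈ [0,1]. -/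
/-!
`G₋ₘ` has the shape `A (1 - x) (1 - e^{-a x - φ}) + ∑ₖ Qₖ (1 - e^{-b x - Φₖ})`. Differentiating
twice, the first summand contributes `-A a e^{-a x - φ} (2 + a (1 - x))`, which is negative as
soon as `A, a > 0` and `x ≤ 1`, and each saturation term contributes `-b² Qₖ e^{-b x - Φₖ} ≤ 0`
when `Qₖ ≥ 0`. A negative second derivative on `(-∞, 1)` gives strict concavity there, hence
on `[0, 1]`.
-/

open Real Finset

/-- The single-group objective `G₋ₘ(x)` of problem P3: the offloading gain as a
function of the pushing probability `x` of group `m`, all other groups' pushing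
probabilities `c k` being fixed. -/
noncomputable def Gminus (M : ℕ) (B : ℝ) (t ρi ρo : Fin M → ℝ) (m : Fin M)
    (c : Fin M → ℝ) (x : ℝ) : ℝ :=
  t m * (1 - x) *
      (1 - Real.exp (-(B * t m * ρi m * x) -
        B * ∑ k ∈ Finset.univ.erase m, t k * ρo k * c k)) +
    ∑ k ∈ Finset.univ.erase m, t k * (1 - c k) *
      (1 - Real.exp (-(B * t m * ρo m * x) -
        (B * (∑ q ∈ (Finset.univ.erase m).erase k, t q * ρo q * c q) +
          B * t k * ρi k * c k)))

lemma hasDerivAt_mul_one_sub (A x : ℝ) : HasDerivAt (fun x : ℝ => A * (1 - x)) (-A) x := by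
  simpa using ((hasDerivAt_id x).const_sub 1).const_mul A

lemma hasDerivAt_exp_neg_mul_sub (a φ x : ℝ) :
    HasDerivAt (fun x => exp (-(a * x) - φ)) (-a * exp (-(a * x) - φ)) x := by
  simpa [mul_comm] using (((hasDerivAt_id x).const_mul a).neg.sub_const φ).exp

section OffloadGain

variable {ι : Type*} (A a φ b : ℝ) (Q Φ : ι → ℝ) (S : Finset ι)

noncomputable def offloadGain (x : ℝ) : ℝ :=
  A * (1 - x) * (1 - exp (-(a * x) - φ)) + ∑ k ∈ S, Q k * (1 - exp (-(b * x) - Φ k))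

lemma deriv_offloadGain :
    deriv (offloadGain A a φ b Q Φ S) = fun x =>
      -A * (1 - exp (-(a * x) - φ)) + A * (1 - x) * (a * exp (-(a * x) - φ))
        + ∑ k ∈ S, Q k * (b * exp (-(b * x) - Φ k)) := by
  funext x
  have hsat : ∀ (c ψ : ℝ), HasDerivAt (fun x => 1 - exp (-(c * x) - ψ))
      (c * exp (-(c * x) - ψ)) x := fun c ψ => by
    simpa using (hasDerivAt_exp_neg_mul_sub c ψ x).const_sub 1
  exact (((hasDerivAt_mul_one_sub A x).mul (hsat a φ)).add
    (HasDerivAt.fun_sum fun k _ => (hsat b (Φ k)).const_mul (Q k))).deriv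

lemma deriv_deriv_offloadGain (x : ℝ) :
    deriv (deriv (offloadGain A a φ b Q Φ S)) x =
      -(A * a) * exp (-(a * x) - φ) * (2 + a * (1 - x))
        - b ^ 2 * ∑ k ∈ S, Q k * exp (-(b * x) - Φ k) := by
  rw [deriv_offloadGain]
  have he := hasDerivAt_exp_neg_mul_sub a φ x
  have hsum : HasDerivAt (fun y => ∑ k ∈ S, Q k * (b * exp (-(b * y) - Φ k)))
      (-b ^ 2 * ∑ k ∈ S, Q k * exp (-(b * x) - Φ k)) x := by
    rw [mul_sum]
    exact HasDerivAt.fun_sum fun k _ =>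
      (((hasDerivAt_exp_neg_mul_sub b (Φ k) x).const_mul b).const_mul (Q k)).congr_deriv (by ring)
  have hfirst := ((he.const_sub 1).const_mul (-A)).add
    ((hasDerivAt_mul_one_sub A x).mul (he.const_mul a))
  refine (hfirst.add hsum).deriv.trans ?_
  ring

variable {A a φ b Q Φ S}

lemma deriv_deriv_offloadGain_neg (hA : 0 < A) (ha : 0 < a) (hQ : ∀ k ∈ S, 0 ≤ Q k)
    {x : ℝ} (hx : x ≤ 1) : deriv (deriv (offloadGain A a φ b Q Φ S)) x < 0 := by
  rw [deriv_deriv_offloadGain]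
  have hinner : 0 < A * a * exp (-(a * x) - φ) * (2 + a * (1 - x)) := by
    have : 0 ≤ a * (1 - x) := mul_nonneg ha.le (by linarith)
    positivity
  have hsat : 0 ≤ b ^ 2 * ∑ k ∈ S, Q k * exp (-(b * x) - Φ k) :=
    mul_nonneg (sq_nonneg b) (sum_nonneg fun k hk => mul_nonneg (hQ k hk) (exp_pos _).le)
  linarith

lemma strictConcaveOn_offloadGain (hA : 0 < A) (ha : 0 < a) (hQ : ∀ k ∈ S, 0 ≤ Q k) :
    StrictConcaveOn ℝ (Set.Iic 1) (offloadGain A a φ b Q Φ S) := by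
  refine strictConcaveOn_of_deriv2_neg (convex_Iic 1) ?_ fun x hx => ?_
  · unfold offloadGain
    fun_prop
  · rw [interior_Iic] at hx
    exact deriv_deriv_offloadGain_neg hA ha hQ hx.le

end OffloadGain

theorem stmt_17_general (M : ℕ) (B : ℝ) (hB : 0 < B)
    (t ρi ρo : Fin M → ℝ) (ht : ∀ i, 0 < t i)
    (hρi : ∀ i, 0 < ρi i ∧ ρi i ≤ 1)
    (m : Fin M) (c : Fin M → ℝ) (hc : ∀ k, k ≠ m → 0 ≤ c k ∧ c k ≤ 1) :
    StrictConcaveOn ℝ (Set.Icc (0 : ℝ) 1) (Gminus M B t ρi ρo m c) ∧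
    ∀ x ∈ Set.Icc (0 : ℝ) 1,
      deriv (deriv (Gminus M B t ρi ρo m c)) x =
        -(B * (t m) ^ 2 * ρi m) *
            Real.exp (-(B * t m * ρi m * x) -
              B * ∑ k ∈ Finset.univ.erase m, t k * ρo k * c k) *
            (2 + B * t m * ρi m * (1 - x)) -
          (B * t m * ρo m) ^ 2 *
            ∑ k ∈ Finset.univ.erase m, t k * (1 - c k) *
              Real.exp (-(B * t m * ρo m * x) -
                (B * (∑ q ∈ (Finset.univ.erase m).erase k, t q * ρo q * c q) +
                  B * t k * ρi k * c k)) ∧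
      -(B * (t m) ^ 2 * ρi m) *
            Real.exp (-(B * t m * ρi m * x) -
              B * ∑ k ∈ Finset.univ.erase m, t k * ρo k * c k) *
            (2 + B * t m * ρi m * (1 - x)) -
          (B * t m * ρo m) ^ 2 *
            ∑ k ∈ Finset.univ.erase m, t k * (1 - c k) *
              Real.exp (-(B * t m * ρo m * x) -
                (B * (∑ q ∈ (Finset.univ.erase m).erase k, t q * ρo q * c q) +
                  B * t k * ρi k * c k)) < 0 := by
  have hG : Gminus M B t ρi ρo m c =
      offloadGain (t m) (B * t m * ρi m) (B * ∑ k ∈ univ.erase m, t k * ρo k * c k)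
        (B * t m * ρo m) (fun k => t k * (1 - c k))
        (fun k => B * (∑ q ∈ (univ.erase m).erase k, t q * ρo q * c q) + B * t k * ρi k * c k)
        (univ.erase m) := rfl
  have hA : 0 < t m := ht m
  have ha : 0 < B * t m * ρi m := by have := (hρi m).1; positivity
  have hQ : ∀ k ∈ univ.erase m, 0 ≤ t k * (1 - c k) := fun k hk =>
    mul_nonneg (ht k).le (sub_nonneg.2 (hc k (ne_of_mem_erase hk)).2)
  constructor
  · rw [hG]
    exact (strictConcaveOn_offloadGain hA ha hQ).subset Set.Icc_subset_Iic_self (convex_Icc 0 1)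
  intro x hx
  have hneg : deriv (deriv (Gminus M B t ρi ρo m c)) x < 0 := by
    rw [hG]; exact deriv_deriv_offloadGain_neg hA ha hQ hx.2
  rw [hG, deriv_deriv_offloadGain] at hneg ⊢
  exact ⟨by ring, by linear_combination hneg⟩

/-- `G₋ₘ` is strictly concave on `[0,1]`, and its second derivative
is the stated expression, which is strictly negative on `[0,1]`. -/
theorem stmt_17 (M : ℕ) (hM : 1 ≤ M) (B : ℝ) (hB : 0 < B)
    (t ρi ρo : Fin M → ℝ) (ht : ∀ i, 0 < t i)
    (hρi : ∀ i, 0 < ρi i ∧ ρi i ≤ 1) (hρo : ∀ i, 0 < ρo i ∧ ρo i ≤ 1)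
    (m : Fin M) (c : Fin M → ℝ) (hc : ∀ k, k ≠ m → 0 ≤ c k ∧ c k ≤ 1) :
    StrictConcaveOn ℝ (Set.Icc (0 : ℝ) 1) (Gminus M B t ρi ρo m c) ∧
    ∀ x ∈ Set.Icc (0 : ℝ) 1,
      deriv (deriv (Gminus M B t ρi ρo m c)) x =
        -(B * (t m) ^ 2 * ρi m) *
            Real.exp (-(B * t m * ρi m * x) -
              B * ∑ k ∈ Finset.univ.erase m, t k * ρo k * c k) *
            (2 + B * t m * ρi m * (1 - x)) -
          (B * t m * ρo m) ^ 2 *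
            ∑ k ∈ Finset.univ.erase m, t k * (1 - c k) *
              Real.exp (-(B * t m * ρo m * x) -
                (B * (∑ q ∈ (Finset.univ.erase m).erase k, t q * ρo q * c q) +
                  B * t k * ρi k * c k)) ∧
      -(B * (t m) ^ 2 * ρi m) *
            Real.exp (-(B * t m * ρi m * x) -
              B * ∑ k ∈ Finset.univ.erase m, t k * ρo k * c k) *
            (2 + B * t m * ρi m * (1 - x)) -
          (B * t m * ρo m) ^ 2 *
            ∑ k ∈ Finset.univ.erase m, t k * (1 - c k) *
              Real.exp (-(B * t m * ρo m * x) -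
                (B * (∑ q ∈ (Finset.univ.erase m).erase k, t q * ρo q * c q) +
                  B * t k * ρi k * c k)) < 0 :=
  stmt_17_general M B hB t ρi ρo ht hρi m c hc
end
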